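/- Let 𝔤 be a linear subspace of 𝔰𝔬(N) satisfying condition (C1). Let P¹ be the orthogonal complement of 𝔤 in End(V) (with respect to the inner product induced by the standard inner product on V), and let P² be the orthogonal complement of 𝔤² in the space of alternating bilinear maps V × V → V (with its induced inner product). Then for every nonzero u ∈ V* and every a ∈ P¹ such that the orthogonal projection of u ∧ a onto P² vanishes, there exists w ∈ V such that a equals the orthogonal projection of u ⊗ w onto P¹. (That is, the symbol sequence V → P¹ → P² of the deformation complex is exact at P¹.) -/

import Mathlib

/-!
Since `u ∧ a` is orthogonal to `P²`, it lies in `𝔤²`, i.e. `u(x) a(y) − u(y) a(x) = φ(x)(y) − φ(y)(x)`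
for a linear map `φ : V → 𝔤`. On `ker u` the bilinear map `φ` is therefore symmetric, while each
`φ(x)` is skew; a trilinear form that is symmetric in two slots and skew in two others vanishes, so
for `x ∈ ker u` the map `p_n ∘ φ(x) ∘ p_n` vanishes (`n` the normal of `ker u`) and (C1) forces
`φ(x) = 0`. Hence `φ = u ⊗ φ(v)` for any `v` with `u(v) = 1`, and then
`u ⊗ (a(v) − φ(v)(v)) − a = −φ(v) ∈ 𝔤` is orthogonal to `P¹`.
-/

open scoped RealInnerProductSpace

noncomputable section

abbrev V (N : ℕ) := EuclideanSpace ℝ (Fin N)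

/-- An endomorphism is skew-symmetric (i.e. belongs to `𝔰𝔬(N)`). -/
def skew {N : ℕ} (A : Module.End ℝ (V N)) : Prop :=
  ∀ x y : V N, ⟪A x, y⟫ = - ⟪x, A y⟫

/-- Orthogonal projection of `V N` onto the orthogonal complement of `v`. -/
def pv {N : ℕ} (v : V N) : Module.End ℝ (V N) :=
  (Submodule.span ℝ {v})ᗮ.subtype ∘ₗ
    (Submodule.orthogonalProjectionOnto (Submodule.span ℝ {v})ᗮ).toLinearMap

/-- Condition (C1): for every nonzero `v`, the map `A ↦ p_v ∘ A ∘ p_v` is injective on `𝔤`. -/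
def C1 {N : ℕ} (g : Set (Module.End ℝ (V N))) : Prop :=
  ∀ v : V N, v ≠ 0 → Set.InjOn (fun A => pv v ∘ₗ A ∘ₗ pv v) g

/-- `u ∧ B`: the `V`-valued alternating bilinear map `(x, y) ↦ u(x)•B(y) − u(y)•B(x)`. -/
def wedgeE {N : ℕ} (u : V N →ₗ[ℝ] ℝ) (B : Module.End ℝ (V N)) :
    V N →ₗ[ℝ] V N →ₗ[ℝ] V N :=
  u.smulRight B - (u.smulRight B).flip

/-- `𝔤²`: the span of the maps `u ∧ B` for `u ∈ V*` and `B ∈ 𝔤`. -/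
def gsq {N : ℕ} (g : Set (Module.End ℝ (V N))) :
    Submodule ℝ (V N →ₗ[ℝ] V N →ₗ[ℝ] V N) :=
  Submodule.span ℝ {C | ∃ (u : V N →ₗ[ℝ] ℝ) (B : Module.End ℝ (V N)), B ∈ g ∧ C = wedgeE u B}

/-- The standard basis vector `eᵢ` of `V N`. -/
def stdb {N : ℕ} (i : Fin N) : V N := EuclideanSpace.single i 1

/-- The inner product on `End(V)` induced by the standard inner product on `V`. -/
def innerEnd {N : ℕ} (A B : Module.End ℝ (V N)) : ℝ :=
  ∑ i : Fin N, ⟪A (stdb i), B (stdb i)⟫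

/-- The inner product on bilinear maps `V × V → V` induced by the standard inner product. -/
def innerBil {N : ℕ} (B C : V N →ₗ[ℝ] V N →ₗ[ℝ] V N) : ℝ :=
  ∑ i : Fin N, ∑ j : Fin N, ⟪B (stdb i) (stdb j), C (stdb i) (stdb j)⟫

/-- `P¹`: the orthogonal complement of `𝔤` in `End(V)`. -/
def P1 {N : ℕ} (g : Set (Module.End ℝ (V N))) : Set (Module.End ℝ (V N)) :=
  {a | ∀ b ∈ g, innerEnd a b = 0}

/-- `P²`: the orthogonal complement of `𝔤²` in the space of alternating bilinear maps
`V × V → V`. -/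
def P2 {N : ℕ} (g : Set (Module.End ℝ (V N))) : Set (V N →ₗ[ℝ] V N →ₗ[ℝ] V N) :=
  {B | (∀ x y : V N, B x y = - B y x) ∧ ∀ C ∈ gsq g, innerBil B C = 0}

/-- `p` is the orthogonal projection of `x` onto the subspace `S` (w.r.t. the inner
product `ip`): `p ∈ S` and `x − p` is orthogonal to `S`. -/
def IsOrthProjOn {M : Type*} [AddCommGroup M] (ip : M → M → ℝ) (S : Set M) (x p : M) :
    Prop :=
  p ∈ S ∧ ∀ s ∈ S, ip (x - p) s = 0

section OrthogonalComplement

variable {E : Type*} [NormedAddCommGroup E] [InnerProductSpace ℝ E]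

lemma mem_of_le_of_forall_inner_orthogonal_inf_eq_zero {K W : Submodule ℝ E}
    [K.HasOrthogonalProjection] (hKW : K ≤ W) {b : E} (hb : b ∈ W)
    (h : ∀ c ∈ Kᗮ ⊓ W, ⟪b, c⟫ = 0) : b ∈ K := by
  rw [← Submodule.sup_orthogonal_inf_of_hasOrthogonalProjection hKW] at hb
  obtain ⟨k, hk, c, hc, rfl⟩ := Submodule.mem_sup.1 hb
  have hcc : ⟪c, c⟫ = 0 := by
    simpa only [inner_add_left, Submodule.inner_right_of_mem_orthogonal hk hc.1, zero_add]
      using h c hc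
  rwa [inner_self_eq_zero.1 hcc, add_zero]

lemma mem_of_le_of_forall_inner_map_eq_zero [FiniteDimensional ℝ E] {M : Type*} [AddCommGroup M]
    [Module ℝ M] {T : M →ₗ[ℝ] E} (hT : Function.Injective T) {K W : Submodule ℝ M}
    (hKW : K ≤ W) {b : M} (hb : b ∈ W)
    (h : ∀ c ∈ W, (∀ k ∈ K, ⟪T k, T c⟫ = 0) → ⟪T b, T c⟫ = 0) : b ∈ K := by
  obtain ⟨k, hk, hkb⟩ : T b ∈ K.map T := by
    refine mem_of_le_of_forall_inner_orthogonal_inf_eq_zero (Submodule.map_mono hKW)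
      (Submodule.mem_map_of_mem hb) ?_
    rintro _ ⟨hcK, c, hc, rfl⟩
    exact h c hc fun k hk =>
      Submodule.inner_right_of_mem_orthogonal (Submodule.mem_map_of_mem hk) hcK
  exact hT hkb ▸ hk

lemma inner_eq_zero_of_symm_of_skew {K : Set E} {φ : E → E → E}
    (hsymm : ∀ x ∈ K, ∀ y ∈ K, φ x y = φ y x)
    (hskew : ∀ x ∈ K, ∀ y ∈ K, ∀ z ∈ K, ⟪φ x y, z⟫ = -⟪y, φ x z⟫)
    {x y z : E} (hx : x ∈ K) (hy : y ∈ K) (hz : z ∈ K) : ⟪φ x y, z⟫ = 0 := by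
  have h : ⟪φ x y, z⟫ = -⟪φ x y, z⟫ :=
    calc ⟪φ x y, z⟫ = -⟪y, φ x z⟫ := hskew x hx y hy z hz
      _ = -⟪φ z x, y⟫ := by rw [real_inner_comm, hsymm x hx z hz]
      _ = ⟪x, φ z y⟫ := by rw [hskew z hz x hx y hy, neg_neg]
      _ = ⟪φ y z, x⟫ := by rw [real_inner_comm, hsymm z hz y hy]
      _ = -⟪z, φ y x⟫ := hskew y hy z hz x hx
      _ = -⟪φ x y, z⟫ := by rw [real_inner_comm, hsymm y hy x hx]
  linarith

end OrthogonalComplement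

section Deformation

variable {N : ℕ}

def bilCoords (N : ℕ) :
    (V N →ₗ[ℝ] V N →ₗ[ℝ] V N) →ₗ[ℝ] EuclideanSpace ℝ (Fin N × Fin N × Fin N) where
  toFun B := WithLp.toLp 2 fun p => B (stdb p.1) (stdb p.2.1) p.2.2
  map_add' _ _ := rfl
  map_smul' _ _ := rfl

lemma inner_bilCoords (B C : V N →ₗ[ℝ] V N →ₗ[ℝ] V N) :
    ⟪bilCoords N B, bilCoords N C⟫ = innerBil B C := by
  simp only [innerBil, PiLp.inner_apply, Fintype.sum_prod_type]
  refine Finset.sum_congr rfl fun i _ => Finset.sum_congr rfl fun j _ => ?_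
  rfl

lemma bilCoords_injective : Function.Injective (bilCoords N) := by
  intro B C hBC
  refine LinearMap.ext_basis (EuclideanSpace.basisFun (Fin N) ℝ).toBasis
    (EuclideanSpace.basisFun (Fin N) ℝ).toBasis fun i j => ?_
  ext k
  rw [OrthonormalBasis.coe_toBasis, EuclideanSpace.basisFun_apply, EuclideanSpace.basisFun_apply]
  exact congr($hBC (i, j, k))

def altBil (N : ℕ) : Submodule ℝ (V N →ₗ[ℝ] V N →ₗ[ℝ] V N) where
  carrier := {B | ∀ x y, B x y = - B y x}
  add_mem' hB hC x y := by simp only [LinearMap.add_apply, hB x y, hC x y, neg_add]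
  zero_mem' _ _ := by simp
  smul_mem' c B hB x y := by simp only [LinearMap.smul_apply, hB x y, smul_neg]

@[simp]
lemma wedgeE_apply (u : V N →ₗ[ℝ] ℝ) (B : Module.End ℝ (V N)) (x y : V N) :
    wedgeE u B x y = u x • B y - u y • B x := rfl

lemma wedgeE_mem_altBil (u : V N →ₗ[ℝ] ℝ) (B : Module.End ℝ (V N)) : wedgeE u B ∈ altBil N :=
  fun x y => by simp

lemma gsq_le_altBil (g : Set (Module.End ℝ (V N))) : gsq g ≤ altBil N := by
  rw [gsq, Submodule.span_le]
  rintro _ ⟨u, B, -, rfl⟩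
  exact wedgeE_mem_altBil u B

lemma mem_gsq_of_forall_mem_P2 {g : Set (Module.End ℝ (V N))}
    {B : V N →ₗ[ℝ] V N →ₗ[ℝ] V N} (hB : B ∈ altBil N)
    (h : ∀ C ∈ P2 g, innerBil B C = 0) : B ∈ gsq g := by
  refine mem_of_le_of_forall_inner_map_eq_zero bilCoords_injective (gsq_le_altBil g) hB
    fun C hC hCg => ?_
  rw [inner_bilCoords]
  refine h C ⟨hC, fun D hD => ?_⟩
  rw [← inner_bilCoords, real_inner_comm]
  exact hCg D hD

lemma exists_eq_sub_flip_of_mem_gsq {g : Submodule ℝ (Module.End ℝ (V N))}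
    {C : V N →ₗ[ℝ] V N →ₗ[ℝ] V N} (hC : C ∈ gsq (g : Set (Module.End ℝ (V N)))) :
    ∃ φ : V N →ₗ[ℝ] Module.End ℝ (V N), (∀ x, φ x ∈ g) ∧ C = φ - φ.flip := by
  induction hC using Submodule.span_induction with
  | mem _ hC =>
    obtain ⟨u, B, hB, rfl⟩ := hC
    exact ⟨u.smulRight B, fun x => g.smul_mem (u x) hB, rfl⟩
  | zero => exact ⟨0, fun _ => g.zero_mem, by ext; simp⟩
  | add _ _ _ _ hC hD =>
    obtain ⟨φ, hφ, rfl⟩ := hC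
    obtain ⟨ψ, hψ, rfl⟩ := hD
    exact ⟨φ + ψ, fun x => g.add_mem (hφ x) (hψ x), by ext; simp; abel⟩
  | smul c _ _ hC =>
    obtain ⟨φ, hφ, rfl⟩ := hC
    exact ⟨c • φ, fun x => g.smul_mem c (hφ x), by ext; simp [mul_sub]⟩

lemma pv_comp_comp_pv_eq_zero {v : V N} {A : Module.End ℝ (V N)}
    (hA : ∀ y z, ⟪v, y⟫ = 0 → ⟪v, z⟫ = 0 → ⟪A y, z⟫ = 0) : pv v ∘ₗ A ∘ₗ pv v = 0 := by
  ext1 y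
  have hy : ⟪v, pv v y⟫ = 0 :=
    Submodule.mem_orthogonal_singleton_iff_inner_right.1 (Submodule.coe_mem _)
  have hAy : A (pv v y) ∈ (ℝ ∙ v)ᗮᗮ := fun z hz => by
    rw [real_inner_comm]
    exact hA _ _ hy (Submodule.mem_orthogonal_singleton_iff_inner_right.1 hz)
  change ((Submodule.orthogonalProjectionOnto (ℝ ∙ v)ᗮ (A (pv v y)) : V N)) = 0
  rw [Submodule.orthogonalProjectionOnto_apply_of_mem_orthogonal hAy, ZeroMemClass.coe_zero]

lemma C1.eq_zero {g : Submodule ℝ (Module.End ℝ (V N))} (hC1 : C1 (g : Set (Module.End ℝ (V N))))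
    {v : V N} (hv : v ≠ 0) {A : Module.End ℝ (V N)} (hA : A ∈ g)
    (h : ∀ y z, ⟪v, y⟫ = 0 → ⟪v, z⟫ = 0 → ⟪A y, z⟫ = 0) : A = 0 :=
  hC1 v hv hA g.zero_mem (by simp [pv_comp_comp_pv_eq_zero h])

lemma apply_eq_zero_of_symm_on_orthogonal {g : Submodule ℝ (Module.End ℝ (V N))}
    (hso : ∀ A ∈ g, skew A) (hC1 : C1 (g : Set (Module.End ℝ (V N)))) {n : V N} (hn : n ≠ 0)
    {φ : V N →ₗ[ℝ] Module.End ℝ (V N)} (hφ : ∀ x, φ x ∈ g)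
    (hsymm : ∀ x y, ⟪n, x⟫ = 0 → ⟪n, y⟫ = 0 → φ x y = φ y x) {x : V N} (hx : ⟪n, x⟫ = 0) :
    φ x = 0 :=
  hC1.eq_zero hn (hφ x) fun _ _ hy hz =>
    inner_eq_zero_of_symm_of_skew (K := {x | ⟪n, x⟫ = 0}) (φ := fun x y => φ x y)
      (fun y hy z hz => hsymm y z hy hz)
      (fun x _ y _ z _ => hso _ (hφ x) y z) hx hy hz

lemma innerEnd_eq_zero_of_mem_P1 {g : Set (Module.End ℝ (V N))} {A s : Module.End ℝ (V N)}
    (hA : A ∈ g) (hs : s ∈ P1 g) : innerEnd A s = 0 := by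
  rw [← hs A hA, innerEnd, innerEnd]
  simp_rw [real_inner_comm]

end Deformation

theorem statement3_general (N : ℕ) (g : Submodule ℝ (Module.End ℝ (V N)))
    (hso : ∀ A ∈ g, skew A) (hC1 : C1 (g : Set (Module.End ℝ (V N))))
    (u : V N →ₗ[ℝ] ℝ) (hu : u ≠ 0) (a : Module.End ℝ (V N))
    (ha : a ∈ P1 (g : Set (Module.End ℝ (V N))))
    (h : IsOrthProjOn innerBil (P2 (g : Set (Module.End ℝ (V N)))) (wedgeE u a) 0) :
    ∃ w : V N, IsOrthProjOn innerEnd (P1 (g : Set (Module.End ℝ (V N)))) (u.smulRight w) a := by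
  obtain ⟨n, hnu⟩ : ∃ n : V N, ∀ x, u x = ⟪n, x⟫ :=
    ⟨(InnerProductSpace.toDual ℝ _).symm u.toContinuousLinearMap,
      fun _ => by rw [InnerProductSpace.toDual_symm_apply]; rfl⟩
  have hn : n ≠ 0 := by
    rintro rfl
    exact hu (LinearMap.ext fun x => by simp [hnu])
  obtain ⟨φ, hφg, hwedge⟩ := exists_eq_sub_flip_of_mem_gsq <|
    mem_gsq_of_forall_mem_P2 (wedgeE_mem_altBil u a) fun C hC => by simpa using h.2 C hC
  have hφ : ∀ x y, u x • a y - u y • a x = φ x y - φ y x := fun x y => by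
    simpa using congr($hwedge x y)
  have hker : ∀ x, u x = 0 → φ x = 0 := fun x hx =>
    apply_eq_zero_of_symm_on_orthogonal hso hC1 hn hφg
      (fun x y hx hy => sub_eq_zero.1 (by simpa [hnu, hx, hy] using (hφ x y).symm))
      (hnu x ▸ hx)
  set v : V N := ⟪n, n⟫⁻¹ • n
  have huv : u v = 1 := by simp [v, hnu, inner_smul_right, hn]
  have hφv : ∀ y, φ y = u y • φ v := fun y =>
    sub_eq_zero.1 (by simpa using hker (y - u y • v) (by simp [huv]))
  refine ⟨a v - φ v v, ha, fun s hs => ?_⟩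
  have hw : u.smulRight (a v - φ v v) - a = -φ v := by
    ext1 y
    have := hφ v y
    rw [huv, one_smul, hφv y] at this
    simp only [LinearMap.sub_apply, LinearMap.smulRight_apply, LinearMap.neg_apply,
      LinearMap.smul_apply] at this ⊢
    linear_combination (norm := module) -this
  rw [hw]
  exact innerEnd_eq_zero_of_mem_P1 (g.neg_mem (hφg v)) hs

/-- Exactness of the symbol sequence `V → P¹ → P²` at `P¹`: if `𝔤 ⊆ 𝔰𝔬(N)` satisfies (C1),
`u ≠ 0`, `a ∈ P¹` and the orthogonal projection of `u ∧ a` onto `P²` vanishes, then `a` is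
the orthogonal projection of `u ⊗ w` onto `P¹` for some `w ∈ V`. -/
theorem statement3 (N : ℕ) (hN : 1 ≤ N) (g : Submodule ℝ (Module.End ℝ (V N)))
    (hso : ∀ A ∈ g, skew A) (hC1 : C1 (g : Set (Module.End ℝ (V N))))
    (u : V N →ₗ[ℝ] ℝ) (hu : u ≠ 0) (a : Module.End ℝ (V N))
    (ha : a ∈ P1 (g : Set (Module.End ℝ (V N))))
    (h : IsOrthProjOn innerBil (P2 (g : Set (Module.End ℝ (V N)))) (wedgeE u a) 0) :
    ∃ w : V N, IsOrthProjOn innerEnd (P1 (g : Set (Module.End ℝ (V N)))) (u.smulRight w) a :=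
  statement3_general N g hso hC1 u hu a ha h
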